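/- arXiv:2301.02213 — 4 statements merged into one kernel-verified Lean document; each statement's English description precedes it below -/
import Mathlib

section
/- Let X be a set and R, S ⊆ X × X. If R \ S ≠ ∅, then d₁(R,S) ∪ d₂(R,S) ≠ ∅. -/
/-- Relational composition: `R ; S`. -/
def rcomp {X : Type*} (R S : Set (X × X)) : Set (X × X) :=
  {p | ∃ z, (p.1, z) ∈ R ∧ (z, p.2) ∈ S}

/-- Complement-converse: `∼R = {(x,y) | (y,x) ∉ R}`. -/
def ncv {X : Type*} (R : Set (X × X)) : Set (X × X) :=
  {p | (p.2, p.1) ∉ R}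

/-- The identity relation on `X`. -/
def idr (X : Type*) : Set (X × X) := {p | p.1 = p.2}

/-- `d₁(R,S) = id_X ∩ (R ; (S ∩ ∼S))`. -/
def d1 {X : Type*} (R S : Set (X × X)) : Set (X × X) :=
  idr X ∩ rcomp R (S ∩ ncv S)

/-- `d₂(R,S) = id_X ∩ (∼S ; (R ∩ ∼S))`. -/
def d2 {X : Type*} (R S : Set (X × X)) : Set (X × X) :=
  idr X ∩ rcomp (ncv S) (R ∩ ncv S)

theorem stmt1 {X : Type*} (R S : Set (X × X)) (h : R \ S ≠ ∅) :
    d1 R S ∪ d2 R S ≠ ∅ := by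
  rw [← Set.nonempty_iff_ne_empty] at h ⊢
  obtain ⟨⟨x, y⟩, hR, hS⟩ := h
  by_cases hyx : (y, x) ∈ S
  · exact ⟨(x, x), Or.inl ⟨rfl, y, hR, hyx, hS⟩⟩
  · exact ⟨(y, y), Or.inr ⟨rfl, x, hS, hR, hyx⟩⟩
end

section
/- Let X be a set and R, S ⊆ X × X. Then R = S if and only if d₁(R,S) ∪ d₂(R,S) ∪ d₁(S,R) ∪ d₂(S,R) = ∅. -/
theorem stmt2 {X : Type*} (R S : Set (X × X)) :
    R = S ↔ d1 R S ∪ d2 R S ∪ d1 S R ∪ d2 S R = ∅ := by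
  constructor
  · rintro rfl
    ext ⟨x, y⟩
    simp only [Set.mem_union, Set.mem_empty_iff_false, iff_false]
    rintro (((⟨hid, z, h1, h2, h3⟩ | ⟨hid, z, h1, h2, h3⟩) | ⟨hid, z, h1, h2, h3⟩) | ⟨hid, z, h1, h2, h3⟩) <;>
      simp only [idr, ncv, Set.mem_setOf_eq] at hid h1 h2 h3 <;> subst hid <;> tauto
  · intro h
    have hmem : ∀ p : X × X, p ∉ d1 R S ∪ d2 R S ∪ d1 S R ∪ d2 S R := by
      intro p hp; rw [h] at hp; exact hp
    have key : ∀ (T U : Set (X × X)),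
        (∀ p : X × X, p ∉ d1 T U) → (∀ p : X × X, p ∉ d2 T U) → T ⊆ U := by
      intro T U h1 h2 ⟨x, y⟩ hxy
      by_contra hns
      by_cases hyx : (y, x) ∈ U
      · exact h1 (x, x) ⟨rfl, y, hxy, hyx, hns⟩
      · exact h2 (y, y) ⟨rfl, x, hns, hxy, hyx⟩
    apply Set.Subset.antisymm
    · exact key R S (fun p hp => hmem p (Or.inl (Or.inl (Or.inl hp))))
        (fun p hp => hmem p (Or.inl (Or.inl (Or.inr hp))))
    · exact key S R (fun p hp => hmem p (Or.inl (Or.inr hp)))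
        (fun p hp => hmem p (Or.inr hp))
end

section
/- Let X be a nonempty set. For R, S ⊆ X × X define t(R,S) = ⊤ ; (d₁(R,S) ∪ d₂(R,S) ∪ d₁(S,R) ∪ d₂(S,R)) ; ⊤ and, for T ⊆ X × X, define d(R,S,T) = (t(R,S) ∩ R) ∪ (∼t(R,S) ∩ T). Then d(R,S,T) = T whenever R = S, and d(R,S,T) = R whenever R ≠ S; that is, d is a discriminator operation on the full algebra of binary relations on X. -/
/-- `t(R,S) = ⊤ ; (d₁(R,S) ∪ d₂(R,S) ∪ d₁(S,R) ∪ d₂(S,R)) ; ⊤`. -/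
def tRS {X : Type*} (R S : Set (X × X)) : Set (X × X) :=
  rcomp (rcomp Set.univ (d1 R S ∪ d2 R S ∪ d1 S R ∪ d2 S R)) Set.univ

/-- `d(R,S,T) = (t(R,S) ∩ R) ∪ (∼t(R,S) ∩ T)`. -/
def dd {X : Type*} (R S T : Set (X × X)) : Set (X × X) :=
  (tRS R S ∩ R) ∪ (ncv (tRS R S) ∩ T)

lemma d_empty {X : Type*} (R : Set (X × X)) :
    d1 R R ∪ d2 R R ∪ d1 R R ∪ d2 R R = (∅ : Set (X × X)) := by
  ext ⟨x, y⟩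
  simp only [d1, d2, idr, rcomp, ncv, Set.mem_union, Set.mem_inter_iff,
    Set.mem_setOf_eq, Set.mem_empty_iff_false, iff_false]
  rintro (((⟨h, z, hz1, hz2, hz3⟩ | ⟨h, z, hz1, hz2, hz3⟩) |
    ⟨h, z, hz1, hz2, hz3⟩) | ⟨h, z, hz1, hz2, hz3⟩) <;> subst h <;> tauto

lemma tRS_univ {X : Type*} (R S : Set (X × X)) (a : X)
    (h : (a, a) ∈ d1 R S ∪ d2 R S ∪ d1 S R ∪ d2 S R) :
    tRS R S = Set.univ := by
  ext p
  simp only [tRS, rcomp, Set.mem_setOf_eq, Set.mem_univ, iff_true]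
  exact ⟨a, ⟨a, trivial, h⟩, trivial⟩

theorem stmt4 {X : Type*} [Nonempty X] (R S T : Set (X × X)) :
    (R = S → dd R S T = T) ∧ (R ≠ S → dd R S T = R) := by
  constructor
  · rintro rfl
    have ht : tRS R R = ∅ := by
      simp only [tRS, d_empty, rcomp]
      ext p
      simp
    simp [dd, ht, ncv]
  · intro hne
    have hwit : ∃ a : X, (a, a) ∈ d1 R S ∪ d2 R S ∪ d1 S R ∪ d2 S R := by
      have : ∃ p : X × X, (p ∈ R ∧ p ∉ S) ∨ (p ∈ S ∧ p ∉ R) := by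
        by_contra hc
        push_neg at hc
        exact hne (Set.ext fun p => ⟨fun h => by
          rcases hc p with ⟨h1, _⟩; tauto, fun h => by
          rcases hc p with ⟨_, h2⟩; tauto⟩)
      obtain ⟨⟨x, y⟩, hp⟩ := this
      rcases hp with ⟨hR, hS⟩ | ⟨hS, hR⟩
      · by_cases hyx : (y, x) ∈ S
        · exact ⟨x, Or.inl (Or.inl (Or.inl ⟨rfl, y, hR, hyx, hS⟩))⟩
        · exact ⟨y, Or.inl (Or.inl (Or.inr ⟨rfl, x, hS, hR, hyx⟩))⟩
      · by_cases hyx : (y, x) ∈ R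
        · exact ⟨x, Or.inl (Or.inr ⟨rfl, y, hS, hyx, hR⟩)⟩
        · exact ⟨y, Or.inr ⟨rfl, x, hR, hS, hyx⟩⟩
    obtain ⟨a, ha⟩ := hwit
    have ht := tRS_univ R S a ha
    simp [dd, ht, ncv]
end

section
/- Let L be a finite distributive lattice with an antitone involution f : L → L, and for a join-irreducible a ∈ L write â = f(κ(a)). Then the operation ˆ is an involution on join-irreducibles: for every join-irreducible a, the element â is join-irreducible and f(κ(f(κ(a)))) = a, i.e. (â)ˆ = a. -/
open Classical in
/-- `κ(a)` is the join of all elements `t` with `a ≰ t`. -/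
noncomputable def kappa {L : Type*} [Lattice L] [Fintype L] [OrderBot L] (a : L) : L :=
  (Finset.univ.filter (fun t => ¬ a ≤ t)).sup id

open Classical

lemma le_kappa_of_not_le {L : Type*} [Lattice L] [Fintype L] [OrderBot L] {a x : L}
    (h : ¬ a ≤ x) : x ≤ kappa a :=
  Finset.le_sup (f := id) (by simp [h])

lemma supPrime_le_finset_sup {L : Type*} [DistribLattice L] [OrderBot L] {a : L}
    (ha : SupPrime a) (s : Finset L) (h : a ≤ s.sup id) : ∃ b ∈ s, a ≤ b := by
  classical
  induction s using Finset.induction with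
  | empty =>
      simp only [Finset.sup_empty, le_bot_iff] at h
      exact absurd (h ▸ isMin_bot) ha.1
  | insert _ _ hx ih =>
      rw [Finset.sup_insert] at h
      rcases ha.2 h with h' | h'
      · exact ⟨_, Finset.mem_insert_self _ _, h'⟩
      · obtain ⟨b, hb, hab⟩ := ih h'
        exact ⟨b, Finset.mem_insert_of_mem hb, hab⟩

lemma not_le_kappa {L : Type*} [DistribLattice L] [Fintype L] [OrderBot L] {a : L}
    (ha : SupPrime a) : ¬ a ≤ kappa a := by
  intro h
  obtain ⟨b, hb, hab⟩ := supPrime_le_finset_sup ha _ h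
  simp only [Finset.mem_filter] at hb
  exact hb.2 hab

lemma le_kappa_iff {L : Type*} [DistribLattice L] [Fintype L] [OrderBot L] {a x : L}
    (ha : SupPrime a) : x ≤ kappa a ↔ ¬ a ≤ x :=
  ⟨fun h hax => not_le_kappa ha (hax.trans h), le_kappa_of_not_le⟩

theorem stmt15 {L : Type*} [DistribLattice L] [Fintype L] [OrderBot L]
    (f : L → L) (hf : Antitone f) (hinv : ∀ x, f (f x) = x)
    (a : L) (ha : SupIrred a) :
    SupIrred (f (kappa a)) ∧ f (kappa (f (kappa a))) = a := by
  have hp : SupPrime a := ha.supPrime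
  have fanti : ∀ x y : L, f x ≤ f y ↔ y ≤ x := by
    intro x y
    refine ⟨fun h => ?_, fun h => hf h⟩
    have := hf h
    rwa [hinv, hinv] at this
  have fsup : ∀ c d : L, f (c ⊔ d) = f c ⊓ f d := by
    intro c d
    refine le_antisymm (le_inf (hf le_sup_left) (hf le_sup_right)) ?_
    have h1 : c ⊔ d ≤ f (f c ⊓ f d) := by
      refine sup_le ?_ ?_
      · calc c = f (f c) := (hinv c).symm
          _ ≤ f (f c ⊓ f d) := hf inf_le_left
      · calc d = f (f d) := (hinv d).symm
          _ ≤ f (f c ⊓ f d) := hf inf_le_right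
    have := hf h1
    rwa [hinv] at this
  set b := f (kappa a) with hb
  have hfb : f b = kappa a := by rw [hb, hinv]
  -- b is sup-irreducible
  have hirr : SupIrred b := by
    constructor
    · intro hmin
      have h1 : f (a ⊔ kappa a) ≤ b := hf le_sup_right
      have h2 : b ≤ f (a ⊔ kappa a) := hmin h1
      rw [fanti] at h2
      exact not_le_kappa hp (le_sup_left.trans h2)
    · intro c d hcd
      have hk : kappa a = f c ⊓ f d := by rw [← fsup, hcd, hfb]
      have : ¬ a ≤ f c ⊓ f d := hk ▸ not_le_kappa hp
      have hor : ¬ a ≤ f c ∨ ¬ a ≤ f d := by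
        by_contra h
        push_neg at h
        exact this (le_inf h.1 h.2)
      rcases hor with h' | h'
      · left
        have h1 : f c ≤ kappa a := le_kappa_of_not_le h'
        have h2 : kappa a ≤ f c := hk ▸ inf_le_left
        have : f c = kappa a := le_antisymm h1 h2
        rw [← hinv c, this, ← hb]
      · right
        have h1 : f d ≤ kappa a := le_kappa_of_not_le h'
        have h2 : kappa a ≤ f d := hk ▸ inf_le_right
        have : f d = kappa a := le_antisymm h1 h2
        rw [← hinv d, this, ← hb]
  refine ⟨hirr, ?_⟩
  -- show kappa b = f a, then conclude
  have hkb : kappa b = f a := by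
    refine le_antisymm ?_ ?_
    · refine Finset.sup_le ?_
      intro t ht
      simp only [Finset.mem_filter] at ht
      have hbt : ¬ b ≤ t := ht.2
      have : a ≤ f t := by
        by_contra hatf
        have h1 : f t ≤ kappa a := le_kappa_of_not_le hatf
        have h2 : f (kappa a) ≤ f (f t) := hf h1
        rw [hinv] at h2
        exact hbt h2
      have := hf this
      rwa [hinv] at this
    · apply le_kappa_of_not_le
      intro hbf
      rw [hb, fanti] at hbf
      exact not_le_kappa hp hbf
  rw [hkb, hinv]
end
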